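/- For every matrix A ∈ ℝ_max^{n×n}, the maximum root of the characteristic polynomial χ_A(t) equals the maximum eigenvalue of A. -/

import Mathlib

open Filter

noncomputable section

/-- The max-plus semiring ℝ_max = ℝ ∪ {ε}, with ε = ⊥ = −∞,
`a ⊕ b = max a b` and `a ⊗ b = a + b` (the `Add` of `WithBot ℝ`). -/
abbrev RMax : Type := WithBot ℝ

/-- Max-plus vectors. -/
abbrev Vec (ι : Type) : Type := ι → RMax

/-- The max-plus zero vector ℰ. -/
def zeroV (ι : Type) : Vec ι := fun _ => (⊥ : RMax)

/-- Max-plus "negation" (inversion for ⊗), fixing ⊥. -/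
def mpNeg (a : RMax) : RMax := WithBot.map (fun r : ℝ => -r) a

section Defs

variable {ι κ₁ κ₂ κ₃ : Type}

/-- Matrix (or vector) sum `M ⊕ N`, entrywise max. -/
def mpAddM (M N : Matrix κ₁ κ₂ RMax) : Matrix κ₁ κ₂ RMax := fun i j => max (M i j) (N i j)

/-- Scalar multiplication `l ⊗ M` of a matrix. -/
def smulM (l : RMax) (M : Matrix κ₁ κ₂ RMax) : Matrix κ₁ κ₂ RMax := fun i j => l + M i j

/-- Scalar multiplication `l ⊗ x` of a vector. -/
def smulV (l : RMax) (x : Vec ι) : Vec ι := fun i => l + x i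

/-- Max-plus matrix product `M ⊗ N`. -/
def mpMul [Fintype κ₂] (M : Matrix κ₁ κ₂ RMax) (N : Matrix κ₂ κ₃ RMax) : Matrix κ₁ κ₃ RMax :=
  fun i j => Finset.univ.sup fun k => M i k + N k j

/-- Max-plus matrix-vector product `M ⊗ x`. -/
def mpMulVec [Fintype κ₂] (M : Matrix κ₁ κ₂ RMax) (x : Vec κ₂) : Vec κ₁ :=
  fun i => Finset.univ.sup fun j => M i j + x j

/-- The max-plus identity matrix `E_n` (0 on the diagonal, ε elsewhere). -/
def mpId [DecidableEq ι] : Matrix ι ι RMax := fun i j => if i = j then (0 : RMax) else ⊥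

/-- Max-plus inverse of a generalized permutation matrix:
the transpose with the finite entries negated. -/
def genInv (P : Matrix ι ι RMax) : Matrix ι ι RMax := fun i j => mpNeg (P j i)

/-- The max-plus determinant `det A = ⊕_π ⊗_i a_{i π(i)}`. -/
def mpDet [Fintype ι] [DecidableEq ι] (A : Matrix ι ι RMax) : RMax :=
  Finset.univ.sup fun π : Equiv.Perm ι => ∑ i, A i (π i)

/-- Max-plus matrix powers. -/
def mpPow [Fintype ι] [DecidableEq ι] (P : Matrix ι ι RMax) : ℕ → Matrix ι ι RMax
  | 0 => mpId
  | k + 1 => mpMul P (mpPow P k)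

/-- The Kleene star `P* = E ⊕ P ⊕ P^{⊗2} ⊕ ⋯ ⊕ P^{⊗(n−1)}`. -/
def mpStar [Fintype ι] [DecidableEq ι] (P : Matrix ι ι RMax) : Matrix ι ι RMax :=
  fun i j => (Finset.range (Fintype.card ι)).sup fun k => mpPow P k i j

/-- A multi-circuit on the vertex set `ι`: a union of vertex-disjoint elementary circuits,
encoded by its vertex set `verts` together with the successor permutation `perm`,
which is the identity outside `verts`.  Its edge set is `{(i, perm i) | i ∈ verts}`
and its length is `verts.card`. -/
structure MultiCircuit (ι : Type) where
  verts : Finset ι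
  perm : Equiv.Perm ι
  fixes : ∀ i, i ∉ verts → perm i = i

/-- The weight `w(C)` of a multi-circuit with respect to the matrix `A`. -/
def mcWeight (A : Matrix ι ι RMax) (C : MultiCircuit ι) : RMax :=
  ∑ i ∈ C.verts, A i (C.perm i)

/-- The multi-circuit `C` lies in the graph `G(A)` (all its edges have weight ≠ ε). -/
def InGraph (A : Matrix ι ι RMax) (C : MultiCircuit ι) : Prop :=
  ∀ i ∈ C.verts, A i (C.perm i) ≠ ⊥

/-- A multi-circuit consisting of a single (elementary) circuit. -/
def IsCircuit (C : MultiCircuit ι) : Prop :=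
  C.verts.Nonempty ∧ ∀ i ∈ C.verts, ∀ j ∈ C.verts, C.perm.SameCycle i j

/-- `D` is a critical circuit of `G(A)`: an elementary circuit of `G(A)` whose average
weight is maximal among all elementary circuits of `G(A)`
(averages `w/ℓ` are compared without division via `ℓ' • w ≥ ℓ • w'`). -/
def IsCritical (A : Matrix ι ι RMax) (D : MultiCircuit ι) : Prop :=
  IsCircuit D ∧ InGraph A D ∧
    ∀ D' : MultiCircuit ι, IsCircuit D' → InGraph A D' →
      D.verts.card • mcWeight A D' ≤ D'.verts.card • mcWeight A D

/-- `ρ` is the maximum average weight of the (elementary) circuits of `G(A)`,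
taken to be ε if `G(A)` has no circuit. -/
def IsMaxCycleMean (A : Matrix ι ι RMax) (ρ : RMax) : Prop :=
  (∀ D : MultiCircuit ι, IsCircuit D → InGraph A D → mcWeight A D ≤ D.verts.card • ρ) ∧
    ((∃ D : MultiCircuit ι, IsCircuit D ∧ InGraph A D ∧ mcWeight A D = D.verts.card • ρ) ∨
      (ρ = ⊥ ∧ ∀ D : MultiCircuit ι, IsCircuit D → ¬InGraph A D))

/-- `l` is a (geometric) eigenvalue of `A`: `A ⊗ x = l ⊗ x` for some `x ≠ ℰ`. -/
def IsEigen [Fintype ι] (A : Matrix ι ι RMax) (l : RMax) : Prop :=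
  ∃ x : Vec ι, x ≠ zeroV ι ∧ mpMulVec A x = smulV l x

variable [Fintype ι] [DecidableEq ι]

/-- The value `w(C) ⊗ l^{⊗(n − ℓ(C))}` of the term of `χ_A(l)` corresponding to the
multi-circuit `C`. -/
def ValAt (A : Matrix ι ι RMax) (C : MultiCircuit ι) (l : RMax) : RMax :=
  mcWeight A C + (Fintype.card ι - C.verts.card) • l

/-- `C` is `μ`-maximal (for a real `μ`): it attains
`χ_A(μ) = max_C (w(C) + (n − ℓ(C))·μ)`. -/
def MaximalAt (A : Matrix ι ι RMax) (C : MultiCircuit ι) (μ : ℝ) : Prop :=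
  ∀ C' : MultiCircuit ι, ValAt A C' (μ : RMax) ≤ ValAt A C (μ : RMax)

/-- `C` is `l`-maximal, for `l ∈ ℝ_max`; for `l = ε` this means `μ`-maximal for all
sufficiently small real `μ`. -/
def IsLamMax (A : Matrix ι ι RMax) (C : MultiCircuit ι) (l : RMax) : Prop :=
  (∀ μ : ℝ, l = (μ : RMax) → MaximalAt A C μ) ∧
    (l = ⊥ → ∃ μ₀ : ℝ, ∀ μ : ℝ, μ ≤ μ₀ → MaximalAt A C μ)

/-- `l` is an algebraic eigenvalue of `A`, i.e. a root of the characteristic polynomial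
`χ_A(t)`: a real `l` is a root iff there are two `l`-maximal multi-circuits of different
lengths, and `ε` is a root iff `G(A)` contains no multi-circuit of length `n`. -/
def IsAlgEigen (A : Matrix ι ι RMax) (l : RMax) : Prop :=
  (l ≠ ⊥ ∧ ∃ C C' : MultiCircuit ι, IsLamMax A C l ∧ IsLamMax A C' l ∧
      C.verts.card ≠ C'.verts.card) ∨
    (l = ⊥ ∧ ∀ C : MultiCircuit ι, C.verts.card = Fintype.card ι → ¬InGraph A C)

open Classical in
/-- The multiplicity of `l` as a root of the characteristic polynomial `χ_A(t)`:
for a real `l` it is the difference between the maximal and the minimal length of an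
`l`-maximal multi-circuit; for `l = ε` it is `n` minus the maximal length of a
multi-circuit of `G(A)`.  It is `0` when `l` is not a root. -/
noncomputable def rootMult (A : Matrix ι ι RMax) (l : RMax) : ℕ :=
  if l = ⊥ then
    Fintype.card ι - sSup {m : ℕ | ∃ C : MultiCircuit ι, InGraph A C ∧ C.verts.card = m}
  else
    sSup {m : ℕ | ∃ C : MultiCircuit ι, IsLamMax A C l ∧ C.verts.card = m} -
      sInf {m : ℕ | ∃ C : MultiCircuit ι, IsLamMax A C l ∧ C.verts.card = m}

/-- The matrix `A_C`. -/
def matC (A : Matrix ι ι RMax) (C : MultiCircuit ι) : Matrix ι ι RMax :=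
  fun i j => if i ∈ C.verts ∧ j = C.perm i then A i j else ⊥

/-- The matrix `A_{∖C}`. -/
def matNotC (A : Matrix ι ι RMax) (C : MultiCircuit ι) : Matrix ι ι RMax :=
  fun i j => if i ∈ C.verts ∧ j = C.perm i then ⊥ else A i j

/-- The diagonal matrix `E_C`. -/
def eC (C : MultiCircuit ι) : Matrix ι ι RMax :=
  fun i j => if i = j ∧ i ∈ C.verts then (0 : RMax) else ⊥

/-- The diagonal matrix `E_{∖C}`. -/
def eNotC (C : MultiCircuit ι) : Matrix ι ι RMax :=
  fun i j => if i = j ∧ i ∉ C.verts then (0 : RMax) else ⊥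

/-- `W(A,l,C) = {x : (A_{∖C} ⊕ l ⊗ E_C) ⊗ x = (A_C ⊕ l ⊗ E_{∖C}) ⊗ x}`. -/
def WAC (A : Matrix ι ι RMax) (l : RMax) (C : MultiCircuit ι) : Set (Vec ι) :=
  {x | mpMulVec (mpAddM (matNotC A C) (smulM l (eC C))) x =
       mpMulVec (mpAddM (matC A C) (smulM l (eNotC C))) x}

/-- `B_{A,l,C} = (A_C ⊕ l ⊗ E_{∖C})^{−1} ⊗ (A_{∖C} ⊕ l ⊗ E_C)`. -/
def Bmat (A : Matrix ι ι RMax) (l : RMax) (C : MultiCircuit ι) : Matrix ι ι RMax :=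
  mpMul (genInv (mpAddM (matC A C) (smulM l (eNotC C)))) (mpAddM (matNotC A C) (smulM l (eC C)))

/-- Assumption (★): for each `l ∈ ℝ_max`, any two distinct `l`-maximal multi-circuits
of `G(A)` have different lengths. -/
def StarAssumption (A : Matrix ι ι RMax) : Prop :=
  ∀ l : RMax, ∀ C C' : MultiCircuit ι, IsLamMax A C l → IsLamMax A C' l →
    C.verts.card = C'.verts.card → C = C'

/-- The perturbed matrix `A(ζ;δ)` with entries `a_{ij} − ζ_{ij}·δ` (ε stays ε). -/
def perturb (A : Matrix ι ι RMax) (ζ : Matrix ι ι ℝ) (δ : ℝ) : Matrix ι ι RMax :=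
  fun i j => A i j + ((-(ζ i j * δ) : ℝ) : RMax)

/-- The set `Z` of perturbation directions `ζ ∈ [0,1]^{n×n}` for which `A(ζ;δ)`
satisfies (★) for all sufficiently small `δ > 0`. -/
def Zset (A : Matrix ι ι RMax) : Set (Matrix ι ι ℝ) :=
  {ζ | (∀ i j, ζ i j ∈ Set.Icc (0 : ℝ) 1) ∧
    ∃ δ' : ℝ, 0 < δ' ∧ ∀ δ : ℝ, 0 < δ → δ < δ' → StarAssumption (perturb A ζ δ)}

/-- The interval `B(l, r) = [l − r, l + r] ⊆ ℝ_max` (and `B(ε, r) = {ε}`). -/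
def mpBall (l : RMax) (r : ℝ) : Set RMax :=
  {l' | (l = ⊥ ∧ l' = ⊥) ∨ ∃ x y : ℝ, l = (x : RMax) ∧ l' = (y : RMax) ∧ |y - x| ≤ r}

/-- Convergence in `ℝ_max` as `δ → +0`. -/
def RMaxTendsto (f : ℝ → RMax) (a : RMax) : Prop :=
  (a = ⊥ → ∀ M : ℝ, ∀ᶠ δ in nhdsWithin 0 (Set.Ioi (0 : ℝ)), f δ < (M : RMax)) ∧
    (∀ x : ℝ, a = (x : RMax) → ∀ ε : ℝ, 0 < ε →
      ∀ᶠ δ in nhdsWithin 0 (Set.Ioi (0 : ℝ)), ∃ y : ℝ, f δ = (y : RMax) ∧ |y - x| < ε)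

/-- The (max-plus) sum `⊕_k U_k` of a family of subsets of `ℝ_max^n`. -/
def setSum {κ : Type} (U : κ → Set (Vec ι)) : Set (Vec ι) :=
  {x | ∃ s : Finset κ, ∃ f : κ → Vec ι, (∀ k ∈ s, f k ∈ U k) ∧
    x = fun i => s.sup fun k => f k i}

/-- The limit `lim_{δ→+0} S(δ)` of a parametrized family of subsets of `ℝ_max^n`. -/
def setLim (S : ℝ → Set (Vec ι)) : Set (Vec ι) :=
  {x | ∃ g : ℝ → Vec ι, (∀ δ : ℝ, 0 < δ → g δ ∈ S δ) ∧
    ∀ i : ι, RMaxTendsto (fun δ => g δ i) (x i)}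

/-- The sum `⊕_{l' ∈ S} W(A', l', C_{l'})`, where `C_{l'}` is an `l'`-maximal
multi-circuit of `G(A')`. -/
def perturbSum (A' : Matrix ι ι RMax) (S : Set RMax) : Set (Vec ι) :=
  setSum fun l : S =>
    {x | ∃ C : MultiCircuit ι, IsLamMax A' C (l : RMax) ∧ x ∈ WAC A' (l : RMax) C}

/-- The algebraic eigenspace
`W(A,l) = ⋂_{ζ∈Z} lim_{δ→+0} ⊕_{l' ∈ B(l,nδ)} W(A(ζ;δ), l', C_{l'}(ζ;δ))`. -/
def algEigenspace (A : Matrix ι ι RMax) (l : RMax) : Set (Vec ι) :=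
  ⋂ ζ ∈ Zset A, setLim fun δ => perturbSum (perturb A ζ δ) (mpBall l (Fintype.card ι * δ))

/-- The max-plus span of a set of vectors: all finite max-plus linear combinations. -/
def mpSpan (S : Set (Vec ι)) : Set (Vec ι) :=
  {x | ∃ s : Finset (Vec ι), ↑s ⊆ S ∧ ∃ c : Vec ι → RMax,
    x = fun i => s.sup fun v => c v + v i}

/-- `B` is a basis of `U`: a minimal spanning set. -/
def IsBasis (B U : Set (Vec ι)) : Prop :=
  mpSpan B = U ∧ ∀ B' : Set (Vec ι), B' ⊆ B → mpSpan B' = U → B' = B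

/-- Tropical orthogonality: the maximum in `ᵗx ⊗ y = ⊕_i x_i ⊗ y_i` is attained
at least twice (a maximum equal to ε counting as attained by all indices). -/
def Orthogonal (x y : Vec ι) : Prop :=
  (Finset.univ.sup fun i => x i + y i) = ⊥ ∨
    ∃ i j : ι, i ≠ j ∧ x i + y i = (Finset.univ.sup fun k => x k + y k) ∧
      x j + y j = (Finset.univ.sup fun k => x k + y k)

/-- The tropical kernel of a matrix: vectors for which, in every row, the maximum is
attained at least twice (a maximum equal to ε counting as attained by all indices). -/
def tropKernel {κ : Type} (A : Matrix κ ι RMax) : Set (Vec ι) :=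
  {x | ∀ i : κ, (Finset.univ.sup fun j => A i j + x j) = ⊥ ∨
    ∃ j k : ι, j ≠ k ∧ A i j + x j = (Finset.univ.sup fun j' => A i j' + x j') ∧
      A i k + x k = (Finset.univ.sup fun j' => A i j' + x j')}

/-- `A` is (tropically) nonsingular: the maximum in `det A` is attained by exactly
one permutation. -/
def Nonsingular (A : Matrix ι ι RMax) : Prop :=
  ∃! π : Equiv.Perm ι, (∑ i, A i (π i)) = mpDet A

/-- The minor `A^{(r,c)}`, deleting row `r` and column `c`. -/
def mpMinor {n : ℕ} (A : Matrix (Fin (n + 1)) (Fin (n + 1)) RMax) (r c : Fin (n + 1)) :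
    Matrix (Fin n) (Fin n) RMax :=
  fun i j => A (r.succAbove i) (c.succAbove j)

/-- The max-plus adjugate, `adj(A)_{ij} = det A^{(j,i)}`. -/
def mpAdj {n : ℕ} (A : Matrix (Fin (n + 1)) (Fin (n + 1)) RMax) :
    Matrix (Fin (n + 1)) (Fin (n + 1)) RMax :=
  fun i j => mpDet (mpMinor A j i)

/-- The submatrix `[A_C]_{KK}` with `K = V(C)`. -/
def subPC (A : Matrix ι ι RMax) (C : MultiCircuit ι) :
    Matrix {k // k ∈ C.verts} {k // k ∈ C.verts} RMax :=
  fun i j => matC A C i.1 j.1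

/-- The submatrix `[A_{∖C}]_{KK}` with `K = V(C)`. -/
def subPNC (A : Matrix ι ι RMax) (C : MultiCircuit ι) :
    Matrix {k // k ∈ C.verts} {k // k ∈ C.verts} RMax :=
  fun i j => matNotC A C i.1 j.1

/-- The matrix `M = [A_C]_{KK}^{−1} ⊗ [A_{∖C}]_{KK}`. -/
def xiM (A : Matrix ι ι RMax) (C : MultiCircuit ι) :
    Matrix {k // k ∈ C.verts} {k // k ∈ C.verts} RMax :=
  mpMul (genInv (subPC A C)) (subPNC A C)

/-- `M* ⊗ ([A_C]_{KK}^{−1} ⊗ [A]_{KL}) ⊗ [x]_L`, the `K`-part of `ξ_{A,C}(x)`. -/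
def xiVec (A : Matrix ι ι RMax) (C : MultiCircuit ι) (x : Vec ι) : Vec {k // k ∈ C.verts} :=
  mpMulVec (mpStar (xiM A C)) (mpMulVec (genInv (subPC A C))
    (fun k : {k // k ∈ C.verts} =>
      (Finset.univ.filter fun j : ι => j ∉ C.verts).sup fun j => A k.1 j + x j))

/-- The linear map `ξ_{A,C} : ℝ_max^n → ℝ_max^n`. -/
def xi (A : Matrix ι ι RMax) (C : MultiCircuit ι) (x : Vec ι) : Vec ι :=
  fun i => if h : i ∈ C.verts then xiVec A C x ⟨i, h⟩ else x i

end Defs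

end

/-!
Both maxima equal the largest mean weight `ρ` of a nonempty multi-circuit of `G(A)` (and are
`ε` when there is none).  At `t = ρ` the term of `χ_A` of the empty multi-circuit ties with that
of a multi-circuit of mean `ρ`, while a real root `μ` needs a multi-circuit of positive length
whose term beats the empty one, i.e. of mean `≥ μ`.  An eigenvector yields a closed walk of mean
`λ` along edges attaining the row maxima of `A ⊗ x`, and closed walks split into circuits, so
`λ ≤ ρ`; conversely, after normalizing `ρ` to `0`, a suitable column of the Kleene plus of `A`
is an eigenvector for `ρ`.
-/

open Finset

namespace MultiCircuit

variable {ι : Type}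

def empty : MultiCircuit ι := ⟨∅, 1, fun _ _ => rfl⟩

@[simp] lemma verts_empty : (empty : MultiCircuit ι).verts = ∅ := rfl

instance [Finite ι] : Finite (MultiCircuit ι) :=
  Finite.of_injective (fun C => (C.verts, C.perm)) <| by
    rintro ⟨_, _, _⟩ ⟨_, _, _⟩ h
    simp_all

lemma pow_apply_of_notMem (C : MultiCircuit ι) {i : ι} (hi : i ∉ C.verts) (t : ℕ) :
    (C.perm ^ t) i = i :=
  Equiv.Perm.pow_apply_eq_self_of_apply_eq_self (C.fixes i hi) t

end MultiCircuit

section Mean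

variable {ι : Type} {A : Matrix ι ι RMax}

@[simp] lemma mcWeight_empty : mcWeight A MultiCircuit.empty = 0 := sum_empty

lemma mcWeight_smulM (l : RMax) (C : MultiCircuit ι) :
    mcWeight (smulM l A) C = C.verts.card • l + mcWeight A C := by
  simp [mcWeight, smulM, sum_add_distrib]

/-- Every multi-circuit has mean weight `w(C)/ℓ(C) ≤ c`; those not in `G(A)` have weight `ε`. -/
def IsMeanUpperBound (A : Matrix ι ι RMax) (c : ℝ) : Prop :=
  ∀ C : MultiCircuit ι, mcWeight A C ≤ C.verts.card • (c : RMax)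

def IsMaxMean (A : Matrix ι ι RMax) (ρ : ℝ) : Prop :=
  IsMeanUpperBound A ρ ∧
    ∃ D : MultiCircuit ι, D.verts.Nonempty ∧ mcWeight A D = D.verts.card • (ρ : RMax)

lemma IsMaxMean.smulM {ρ : ℝ} (h : IsMaxMean A ρ) (l : ℝ) :
    IsMaxMean (smulM (l : RMax) A) (l + ρ) := by
  obtain ⟨hb, D, hD, hw⟩ := h
  refine ⟨fun C => ?_, D, hD, ?_⟩
  · rw [mcWeight_smulM, WithBot.coe_add, nsmul_add]
    exact add_le_add_right (hb C) _
  · rw [mcWeight_smulM, hw, WithBot.coe_add, nsmul_add]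

lemma isMeanUpperBound_or_isMaxMean [Finite ι] (A : Matrix ι ι RMax) :
    (∀ c, IsMeanUpperBound A c) ∨ ∃ ρ, IsMaxMean A ρ := by
  set S : Set (MultiCircuit ι) := {C | C.verts.Nonempty ∧ mcWeight A C ≠ ⊥}
  have hbound_of_notMem : ∀ C ∉ S, ∀ c : ℝ, mcWeight A C ≤ C.verts.card • (c : RMax) := by
    intro C hC c
    rcases C.verts.eq_empty_or_nonempty with h | h
    · simp [mcWeight, h]
    · have hbot : mcWeight A C = ⊥ := by simpa [S, h] using hC
      simp [hbot]
  set mean : MultiCircuit ι → ℝ := fun C => (mcWeight A C).unbotD 0 / C.verts.card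
  have hmean : ∀ C ∈ S, mcWeight A C = ((C.verts.card * mean C : ℝ) : RMax) := by
    rintro C ⟨hne, hw⟩
    obtain ⟨w, hw⟩ := WithBot.ne_bot_iff_exists.mp hw
    have : (C.verts.card : ℝ) ≠ 0 := by exact_mod_cast hne.card_pos.ne'
    simp [mean, ← hw, mul_div_cancel₀ _ this]
  rcases S.eq_empty_or_nonempty with hS | hS
  · exact Or.inl fun c C => hbound_of_notMem C (hS ▸ Set.notMem_empty C) c
  obtain ⟨D, hD, hmax⟩ := S.exists_max_image mean S.toFinite hS
  refine Or.inr ⟨mean D, fun C => ?_, D, hD.1, ?_⟩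
  · by_cases hC : C ∈ S
    · rw [hmean C hC, ← WithBot.coe_nsmul, nsmul_eq_mul, WithBot.coe_le_coe]
      exact mul_le_mul_of_nonneg_left (hmax C hC) (Nat.cast_nonneg _)
    · exact hbound_of_notMem C hC _
  · rw [hmean D hD, ← WithBot.coe_nsmul, nsmul_eq_mul]

end Mean

section Algebraic

variable {ι : Type} [Fintype ι] {A : Matrix ι ι RMax}

lemma isLamMax_coe_iff {C : MultiCircuit ι} {μ : ℝ} : IsLamMax A C μ ↔ MaximalAt A C μ :=
  ⟨fun h => h.1 μ rfl, fun h => ⟨fun _ hν => WithBot.coe_injective hν ▸ h,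
    fun hμ => absurd hμ WithBot.coe_ne_bot⟩⟩

lemma valAt_empty (l : RMax) : ValAt A MultiCircuit.empty l = Fintype.card ι • l := by
  simp [ValAt]

lemma valAt_le_of_isMeanUpperBound {c : ℝ} (hb : IsMeanUpperBound A c) (C : MultiCircuit ι) :
    ValAt A C c ≤ Fintype.card ι • (c : RMax) :=
  calc ValAt A C c ≤ C.verts.card • (c : RMax) + (Fintype.card ι - C.verts.card) • (c : RMax) :=
        add_le_add_left (hb C) _
    _ = Fintype.card ι • (c : RMax) := by rw [← add_nsmul, Nat.add_sub_cancel' (card_le_univ _)]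

lemma maximalAt_empty {c : ℝ} (hb : IsMeanUpperBound A c) : MaximalAt A MultiCircuit.empty c :=
  fun C => (valAt_le_of_isMeanUpperBound hb C).trans_eq (valAt_empty _).symm

/-- At `t = ρ` the empty multi-circuit and a multi-circuit of mean `ρ` give tying terms of
`χ_A(t)` of different degrees. -/
lemma isAlgEigen_of_isMaxMean {ρ : ℝ} (h : IsMaxMean A ρ) : IsAlgEigen A ρ := by
  obtain ⟨hb, D, hD, hw⟩ := h
  have hD_val : ValAt A D ρ = Fintype.card ι • (ρ : RMax) := by
    rw [ValAt, hw, ← add_nsmul, Nat.add_sub_cancel' (card_le_univ _)]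
  have hD_max : MaximalAt A D ρ := fun C => hD_val ▸ valAt_le_of_isMeanUpperBound hb C
  refine Or.inl ⟨WithBot.coe_ne_bot, .empty, D, isLamMax_coe_iff.2 (maximalAt_empty hb),
    isLamMax_coe_iff.2 hD_max, ?_⟩
  simpa using hD.card_pos.ne

lemma exists_maximalAt_card_ne_zero {μ : ℝ} (h : IsAlgEigen A μ) :
    ∃ C : MultiCircuit ι, MaximalAt A C μ ∧ C.verts.card ≠ 0 := by
  rcases h with ⟨-, C, C', hC, hC', hne⟩ | ⟨h, -⟩
  · rw [isLamMax_coe_iff] at hC hC'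
    by_cases h0 : C.verts.card = 0
    · exact ⟨C', hC', by omega⟩
    · exact ⟨C, hC, h0⟩
  · exact absurd h WithBot.coe_ne_bot

lemma le_of_isAlgEigen {c μ : ℝ} (hb : IsMeanUpperBound A c) (h : IsAlgEigen A μ) : μ ≤ c := by
  obtain ⟨C, hC, hcard⟩ := exists_maximalAt_card_ne_zero h
  have key : Fintype.card ι • (μ : RMax) ≤
      C.verts.card • (c : RMax) + (Fintype.card ι - C.verts.card) • (μ : RMax) :=
    calc Fintype.card ι • (μ : RMax) = ValAt A .empty μ := (valAt_empty _).symm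
      _ ≤ ValAt A C μ := hC .empty
      _ ≤ _ := add_le_add_left (hb C) _
  rw [← WithBot.coe_nsmul, ← WithBot.coe_nsmul, ← WithBot.coe_nsmul, ← WithBot.coe_add,
    WithBot.coe_le_coe, nsmul_eq_mul, nsmul_eq_mul, nsmul_eq_mul,
    Nat.cast_sub (card_le_univ _)] at key
  have hpos : (0 : ℝ) < C.verts.card := by exact_mod_cast Nat.pos_of_ne_zero hcard
  exact le_of_mul_le_mul_left (by linarith) hpos

end Algebraic

section Walk

variable {ι : Type} (M : Matrix ι ι RMax)

def walkWeight (f : ℕ → ι) (k : ℕ) : RMax := ∑ t ∈ range k, M (f t) (f (t + 1))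

lemma walkWeight_add (f : ℕ → ι) (k l : ℕ) :
    walkWeight M f (k + l) = walkWeight M f k + walkWeight M (fun t => f (k + t)) l := by
  simp only [walkWeight, sum_range_add, add_assoc]

lemma walkWeight_succ (f : ℕ → ι) (k : ℕ) :
    walkWeight M f (k + 1) = M (f 0) (f 1) + walkWeight M (fun t => f (t + 1)) k := by
  rw [walkWeight, sum_range_succ', add_comm]
  rfl

lemma walkWeight_congr {f g : ℕ → ι} {k : ℕ} (h : ∀ t ≤ k, f t = g t) :
    walkWeight M f k = walkWeight M g k :=
  sum_congr rfl fun t ht => by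
    rw [mem_range] at ht
    rw [h t ht.le, h (t + 1) ht]

def removeLoop (f : ℕ → ι) (a d : ℕ) : ℕ → ι := fun t => if t ≤ a then f t else f (t + d)

variable {M}

lemma removeLoop_zero (f : ℕ → ι) (a d : ℕ) : removeLoop f a d 0 = f 0 := if_pos (Nat.zero_le a)

lemma removeLoop_add {f : ℕ → ι} {a d : ℕ} (hf : f a = f (a + d)) (e : ℕ) :
    removeLoop f a d (a + e) = f (a + d + e) := by
  unfold removeLoop
  split_ifs with h
  · obtain rfl : e = 0 := by omega
    simpa using hf
  · congr 1
    omega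

lemma walkWeight_removeLoop {f : ℕ → ι} {a d : ℕ} (hf : f a = f (a + d)) (e : ℕ) :
    walkWeight M f (a + d + e) =
      walkWeight M (removeLoop f a d) (a + e) + walkWeight M (fun t => f (a + t)) d := by
  have hpre : walkWeight M (removeLoop f a d) a = walkWeight M f a :=
    walkWeight_congr M fun t ht => if_pos ht
  have hpost : (fun t => removeLoop f a d (a + t)) = fun t => f (a + d + t) :=
    funext (removeLoop_add hf)
  rw [walkWeight_add, walkWeight_add, walkWeight_add, hpre, hpost]
  ac_rfl

lemma exists_loop_of_not_injOn {f : ℕ → ι} {k : ℕ} (h : ¬ Set.InjOn f (range k)) :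
    ∃ a d e, 0 < d ∧ 0 < e ∧ a + d + e = k ∧ f a = f (a + d) := by
  obtain ⟨x, hx, y, hy, hxy, hne⟩ : ∃ x ∈ (range k : Set ℕ), ∃ y ∈ (range k : Set ℕ),
      f x = f y ∧ x ≠ y := by
    simpa [Set.InjOn] using h
  simp only [coe_range, Set.mem_Iio] at hx hy
  rcases lt_or_gt_of_ne hne with hlt | hlt
  · exact ⟨x, y - x, k - y, by omega, by omega, by omega, by rwa [Nat.add_sub_cancel' hlt.le]⟩
  · exact ⟨y, x - y, k - x, by omega, by omega, by omega, by
      rw [Nat.add_sub_cancel' hlt.le]; exact hxy.symm⟩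

lemma exists_multiCircuit_of_injOn {f : ℕ → ι} {k : ℕ} (hf : f k = f 0)
    (hinj : Set.InjOn f (range k)) :
    ∃ C : MultiCircuit ι, C.verts.card = k ∧ mcWeight M C = walkWeight M f k := by
  classical
  set L := (List.range k).map f
  have hnd : L.Nodup := List.nodup_range.map_on fun a ha b hb =>
    hinj (by simpa using ha) (by simpa using hb)
  have hstep : ∀ t < k, L.formPerm (f t) = f (t + 1) := by
    intro t ht
    have h := List.formPerm_apply_getElem L hnd t (by simpa [L] using ht)
    simp only [L, List.getElem_map, List.getElem_range, List.length_map, List.length_range] at h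
    rw [h]
    rcases (Nat.succ_le_of_lt ht).lt_or_eq with hlt | heq
    · rw [Nat.mod_eq_of_lt hlt]
    · rw [show t + 1 = k from heq, Nat.mod_self, hf]
  refine ⟨⟨(range k).image f, L.formPerm, fun i hi => List.formPerm_apply_of_notMem
    (by simpa [L] using hi)⟩, by simp [card_image_of_injOn hinj], ?_⟩
  rw [mcWeight, sum_image hinj]
  exact sum_congr rfl fun t ht => by rw [hstep t (mem_range.mp ht)]

/-- Cutting out loops splits a closed walk into elementary circuits. -/
lemma walkWeight_le_of_isMeanUpperBound {c : ℝ} (hb : IsMeanUpperBound M c) (k : ℕ)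
    (f : ℕ → ι) (hf : f k = f 0) : walkWeight M f k ≤ k • (c : RMax) := by
  induction k using Nat.strong_induction_on generalizing f with
  | _ k ih =>
  by_cases hinj : Set.InjOn f (range k)
  · obtain ⟨C, hcard, hw⟩ := exists_multiCircuit_of_injOn hf hinj
    rw [← hw, ← hcard]
    exact hb C
  obtain ⟨a, d, e, hd, he, rfl, hloop⟩ := exists_loop_of_not_injOn hinj
  have hrest := ih (a + e) (by omega) (removeLoop f a d) (by
    rw [removeLoop_add hloop, removeLoop_zero, hf])
  have hcycle := ih d (by omega) (fun t => f (a + t)) (by simpa using hloop.symm)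
  calc walkWeight M f (a + d + e)
      = walkWeight M (removeLoop f a d) (a + e) + walkWeight M (fun t => f (a + t)) d :=
        walkWeight_removeLoop hloop e
    _ ≤ (a + e) • (c : RMax) + d • (c : RMax) := add_le_add hrest hcycle
    _ = (a + d + e) • (c : RMax) := by rw [← add_nsmul]; congr 1; omega

/-- Telescoping along a closed walk on whose edges `M x = l x` is tight. -/
lemma walkWeight_eq_nsmul_of_tight {x : Vec ι} {l : RMax} {f : ℕ → ι} {k : ℕ}
    (hx : ∀ t, x (f t) ≠ ⊥) (hedge : ∀ t, M (f t) (f (t + 1)) + x (f (t + 1)) = l + x (f t))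
    (hf : f k = f 0) : walkWeight M f k = k • l := by
  have hrot : ∑ t ∈ range k, x (f (t + 1)) = ∑ t ∈ range k, x (f t) := by
    cases k with
    | zero => rfl
    | succ k => rw [sum_range_succ, sum_range_succ' (fun t => x (f t)), hf]
  have hS : ∑ t ∈ range k, x (f t) ≠ ⊥ := by
    rw [Ne, WithBot.sum_eq_bot_iff]
    exact fun ⟨t, _, ht⟩ => hx t ht
  apply (WithBot.add_right_inj hS).mp
  calc walkWeight M f k + ∑ t ∈ range k, x (f t)
      = ∑ t ∈ range k, (M (f t) (f (t + 1)) + x (f (t + 1))) := by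
        rw [walkWeight, ← hrot, sum_add_distrib]
    _ = ∑ t ∈ range k, (l + x (f t)) := sum_congr rfl fun t _ => hedge t
    _ = k • l + ∑ t ∈ range k, x (f t) := by rw [sum_add_distrib, sum_const, card_range]

lemma sum_walkWeight_orbit (D : MultiCircuit ι) (L : ℕ) :
    ∑ j ∈ D.verts, walkWeight M (fun t => (D.perm ^ t) j) L = L • mcWeight M D := by
  simp only [walkWeight]
  rw [sum_comm, ← card_range L, ← sum_const, card_range]
  refine sum_congr rfl fun t _ => ?_
  simp only [pow_succ', Equiv.Perm.mul_apply]
  exact Equiv.Perm.sum_comp (D.perm ^ t) D.verts (fun j => M j (D.perm j))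
    fun i hi => by_contra fun hv => hi (D.pow_apply_of_notMem hv t)

end Walk

section KleeneStar

variable {ι : Type} [Fintype ι] (M : Matrix ι ι RMax)

lemma add_mpPow_le_mpPow_succ [DecidableEq ι] (k : ℕ) (i m j : ι) :
    M i m + mpPow M k m j ≤ mpPow M (k + 1) i j :=
  le_sup (f := fun m => M i m + mpPow M k m j) (mem_univ m)

lemma walkWeight_le_mpPow [DecidableEq ι] (f : ℕ → ι) (k : ℕ) :
    walkWeight M f k ≤ mpPow M k (f 0) (f k) := by
  induction k generalizing f with
  | zero => simp [walkWeight, mpPow, mpId]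
  | succ k ih =>
    rw [walkWeight_succ]
    exact (add_le_add_right (ih _) _).trans (add_mpPow_le_mpPow_succ M k _ _ _)

variable {M}

lemma exists_walk_of_mpPow_ne_bot [DecidableEq ι] {k : ℕ} {i j : ι} (h : mpPow M k i j ≠ ⊥) :
    ∃ f : ℕ → ι, f 0 = i ∧ f k = j ∧ mpPow M k i j ≤ walkWeight M f k := by
  induction k generalizing i with
  | zero =>
    by_cases hij : i = j
    · exact ⟨fun _ => i, rfl, hij, by simp [mpPow, mpId, walkWeight, hij]⟩
    · simp [mpPow, mpId, hij] at h
  | succ k ih =>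
    have : Nonempty ι := ⟨i⟩
    obtain ⟨m, -, hm⟩ := exists_mem_eq_sup univ univ_nonempty fun m => M i m + mpPow M k m j
    change univ.sup (fun m => M i m + mpPow M k m j) ≠ ⊥ at h
    rw [hm] at h
    obtain ⟨g, hg0, hgk, hg⟩ := ih (WithBot.add_ne_bot.mp h).2
    refine ⟨fun t => if t = 0 then i else g (t - 1), rfl, by simpa using hgk, ?_⟩
    change univ.sup (fun m => M i m + mpPow M k m j) ≤ _
    rw [hm, walkWeight_succ]
    simpa [hg0] using add_le_add_right hg (M i m)

/-- With no closed walk of positive weight, cutting loops out of a walk does not decrease its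
weight, so every walk is dominated by one with the same ends and at most `n` edges. -/
lemma exists_short_walk (h0 : ∀ k (f : ℕ → ι), f k = f 0 → walkWeight M f k ≤ 0)
    (f : ℕ → ι) {k : ℕ} (hk : 1 ≤ k) :
    ∃ (g : ℕ → ι) (s : ℕ), 1 ≤ s ∧ s ≤ Fintype.card ι ∧ g 0 = f 0 ∧ g s = f k ∧
      walkWeight M f k ≤ walkWeight M g s := by
  induction k using Nat.strong_induction_on generalizing f with
  | _ k ih =>
  by_cases hkN : k ≤ Fintype.card ι
  · exact ⟨f, k, hk, hkN, rfl, rfl, le_rfl⟩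
  have hinj : ¬ Set.InjOn f (range k) := fun hinj => by
    have := card_le_card_of_injOn f (fun _ _ => mem_coe.2 (mem_univ _)) hinj
    simp only [card_range, card_univ] at this
    omega
  obtain ⟨a, d, e, hd, he, rfl, hloop⟩ := exists_loop_of_not_injOn hinj
  obtain ⟨g, s, hs1, hsN, hg0, hgs, hle⟩ := ih (a + e) (by omega) (removeLoop f a d) (by omega)
  refine ⟨g, s, hs1, hsN, by rw [hg0, removeLoop_zero], by rw [hgs, removeLoop_add hloop], ?_⟩
  calc walkWeight M f (a + d + e)
      = walkWeight M (removeLoop f a d) (a + e) + walkWeight M (fun t => f (a + t)) d :=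
        walkWeight_removeLoop hloop e
    _ ≤ walkWeight M (removeLoop f a d) (a + e) + 0 :=
        add_le_add_right (h0 d _ (by simpa using hloop.symm)) _
    _ ≤ walkWeight M g s := by rwa [add_zero]

lemma mpPow_le_sup_Icc [DecidableEq ι]
    (h0 : ∀ k (f : ℕ → ι), f k = f 0 → walkWeight M f k ≤ 0) {t : ℕ} (ht : 1 ≤ t) (i j : ι) :
    mpPow M t i j ≤ (Icc 1 (Fintype.card ι)).sup fun k => mpPow M k i j := by
  by_cases hbot : mpPow M t i j = ⊥
  · simp [hbot]
  obtain ⟨f, rfl, rfl, hf⟩ := exists_walk_of_mpPow_ne_bot hbot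
  obtain ⟨g, s, hs1, hsN, hg0, hgs, hfg⟩ := exists_short_walk h0 f ht
  calc mpPow M t (f 0) (f t) ≤ walkWeight M g s := hf.trans hfg
    _ ≤ mpPow M s (g 0) (g s) := walkWeight_le_mpPow M g s
    _ ≤ _ := by
      rw [hg0, hgs]
      exact le_sup (f := fun k => mpPow M k (f 0) (f t)) (mem_Icc.2 ⟨hs1, hsN⟩)

/-- The column of the Kleene plus `M ⊕ M^{⊗2} ⊕ ⋯ ⊕ M^{⊗n}` at a node on a closed walk of
weight `0` is an eigenvector. -/
lemma isEigen_zero_of_closedWalk [DecidableEq ι]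
    (h0 : ∀ k (f : ℕ → ι), f k = f 0 → walkWeight M f k ≤ 0) {f : ℕ → ι} {k : ℕ}
    (hk : 1 ≤ k) (hf : f k = f 0) (hw : 0 ≤ walkWeight M f k) : IsEigen M 0 := by
  set j := f 0
  have hIcc : (Icc 1 (Fintype.card ι)).Nonempty := nonempty_Icc.2 (Fintype.card_pos_iff.2 ⟨j⟩)
  set x : Vec ι := fun i => (Icc 1 (Fintype.card ι)).sup fun k => mpPow M k i j
  have hxj : 0 ≤ x j := by
    refine hw.trans ((walkWeight_le_mpPow M f k).trans ?_)
    rw [hf]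
    exact mpPow_le_sup_Icc h0 hk j j
  have hpow_le : ∀ t i, mpPow M t i j ≤ x i := by
    rintro (_ | t) i
    · by_cases h : i = j
      · simpa [mpPow, mpId, h] using hxj
      · simp [mpPow, mpId, h]
    · exact mpPow_le_sup_Icc h0 (Nat.le_add_left 1 t) i j
  refine ⟨x, fun hx => ?_, funext fun i => le_antisymm ?_ ?_⟩
  · rw [hx] at hxj
    exact absurd hxj (by simp [zeroV])
  · simp only [mpMulVec, smulV, zero_add]
    refine Finset.sup_le fun m _ => ?_
    obtain ⟨t, ht, hxm⟩ := exists_mem_eq_sup _ hIcc fun k => mpPow M k m j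
    rw [show x m = mpPow M t m j from hxm]
    exact (add_mpPow_le_mpPow_succ M t i m j).trans (hpow_le _ i)
  · simp only [mpMulVec, smulV, zero_add]
    refine Finset.sup_le fun t ht => ?_
    obtain ⟨t, rfl⟩ : ∃ s, t = s + 1 := ⟨t - 1, by rw [mem_Icc] at ht; omega⟩
    exact sup_mono_fun fun m _ => add_le_add_right (hpow_le t m) _

end KleeneStar

section Geometric

variable {ι : Type} [Fintype ι] {M : Matrix ι ι RMax}

lemma IsEigen.smulM {l : RMax} (h : IsEigen M l) (c : RMax) : IsEigen (smulM c M) (c + l) := by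
  obtain ⟨x, hx0, hx⟩ := h
  obtain ⟨i₀, -⟩ := Function.ne_iff.mp hx0
  have : Nonempty ι := ⟨i₀⟩
  refine ⟨x, hx0, funext fun i => ?_⟩
  have hi : univ.sup (fun j => M i j + x j) = l + x i := congrFun hx i
  simp only [mpMulVec, smulV]
  calc univ.sup (fun j => c + M i j + x j) = c + univ.sup fun j => M i j + x j := by
        rw [apply_sup_eq_sup_comp_of_nonempty (fun _ _ h => add_le_add_right h c) univ_nonempty]
        simp only [Function.comp_def, add_assoc]
    _ = c + l + x i := by rw [hi, add_assoc]

/-- Following from each node in the support of an eigenvector an edge attaining the maximum in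
`M ⊗ x` leads, by pigeonhole, around a closed walk of mean weight `μ`. -/
lemma exists_closedWalk_of_isEigen {μ : ℝ} (h : IsEigen M μ) :
    ∃ (k : ℕ) (f : ℕ → ι), 1 ≤ k ∧ f k = f 0 ∧ walkWeight M f k = k • (μ : RMax) := by
  obtain ⟨x, hx0, hx⟩ := h
  obtain ⟨i₀, hi₀⟩ := Function.ne_iff.mp hx0
  have hsucc : ∀ i, x i ≠ ⊥ → ∃ j, x j ≠ ⊥ ∧ M i j + x j = μ + x i := by
    intro i hi
    have : Nonempty ι := ⟨i⟩
    obtain ⟨j, -, hj⟩ := exists_mem_eq_sup univ univ_nonempty fun j => M i j + x j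
    have hj' : M i j + x j = μ + x i := hj.symm.trans (congrFun hx i)
    refine ⟨j, fun hxj => ?_, hj'⟩
    rw [hxj, WithBot.add_bot] at hj'
    exact WithBot.add_ne_bot.mpr ⟨WithBot.coe_ne_bot, hi⟩ hj'.symm
  choose! F hFx hF using hsucc
  have hiter : ∀ t, x (F^[t] i₀) ≠ ⊥ := by
    intro t
    induction t with
    | zero => exact hi₀
    | succ t ih => rw [Function.iterate_succ_apply']; exact hFx _ ih
  obtain ⟨a, b, hab, hrep⟩ : ∃ a b, a < b ∧ F^[a] i₀ = F^[b] i₀ := by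
    obtain ⟨a, b, hne, h⟩ := Finite.exists_ne_map_eq_of_infinite fun t => F^[t] i₀
    rcases lt_or_gt_of_ne hne with hlt | hlt
    exacts [⟨a, b, hlt, h⟩, ⟨b, a, hlt, h.symm⟩]
  have hclosed : F^[a + (b - a)] i₀ = F^[a + 0] i₀ := by
    rw [Nat.add_sub_cancel' hab.le, add_zero, hrep]
  refine ⟨b - a, fun t => F^[a + t] i₀, by omega, hclosed, ?_⟩
  refine walkWeight_eq_nsmul_of_tight (x := x) (fun t => hiter _) (fun t => ?_) hclosed
  rw [← add_assoc, Function.iterate_succ_apply']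
  exact hF _ (hiter _)

lemma le_of_isEigen {c μ : ℝ} (hb : IsMeanUpperBound M c) (h : IsEigen M μ) : μ ≤ c := by
  obtain ⟨k, f, hk, hf, hw⟩ := exists_closedWalk_of_isEigen h
  have key := walkWeight_le_of_isMeanUpperBound hb k f hf
  rw [hw, ← WithBot.coe_nsmul, ← WithBot.coe_nsmul, WithBot.coe_le_coe] at key
  exact (nsmul_le_nsmul_iff_right (by omega)).mp key

/-- Averaging over orbits: some orbit walk `j, π j, π² j, …` of a multi-circuit of weight `0`
has weight `≥ 0`. -/
lemma isEigen_zero_of_isMaxMean_zero [DecidableEq ι] (h : IsMaxMean M 0) : IsEigen M 0 := by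
  obtain ⟨hb, D, hD, hw⟩ := h
  have h0 : ∀ k (f : ℕ → ι), f k = f 0 → walkWeight M f k ≤ 0 := fun k f hf => by
    simpa using walkWeight_le_of_isMeanUpperBound hb k f hf
  set L := orderOf D.perm
  set w : ι → RMax := fun j => walkWeight M (fun t => (D.perm ^ t) j) L
  obtain ⟨j, -, hmax⟩ := D.verts.exists_max_image w hD
  have hsum : 0 ≤ D.verts.card • w j :=
    calc (0 : RMax) = L • mcWeight M D := by simp [hw]
      _ = ∑ j ∈ D.verts, w j := (sum_walkWeight_orbit D L).symm
      _ ≤ D.verts.card • w j := sum_le_card_nsmul _ _ _ hmax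
  exact isEigen_zero_of_closedWalk h0 (orderOf_pos D.perm) (by simp [pow_orderOf_eq_one])
    ((nsmul_nonneg_iff hD.card_pos.ne').mp hsum)

lemma isEigen_of_isMaxMean [DecidableEq ι] {ρ : ℝ} (h : IsMaxMean M ρ) : IsEigen M ρ := by
  have hB : IsMaxMean (smulM ((-ρ : ℝ) : RMax) M) 0 := by simpa using h.smulM (-ρ)
  have hM : smulM (ρ : RMax) (smulM ((-ρ : ℝ) : RMax) M) = M := by
    funext i j
    simp [smulM, ← add_assoc, ← WithBot.coe_add]
  simpa [hM] using (isEigen_zero_of_isMaxMean_zero hB).smulM (ρ : RMax)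

end Geometric

section MaxMean

variable {ι : Type} {A : Matrix ι ι RMax} {s : Set RMax} {a : RMax}

lemma IsGreatest.eq_bot_of_forall_isMeanUpperBound (h : IsGreatest s a)
    (hle : ∀ c μ : ℝ, IsMeanUpperBound A c → (μ : RMax) ∈ s → μ ≤ c)
    (hall : ∀ c, IsMeanUpperBound A c) : a = ⊥ := by
  induction a using WithBot.recBotCoe with
  | bot => rfl
  | coe μ => linarith [hle (μ - 1) μ (hall _) h.1]

lemma IsGreatest.eq_of_isMaxMean (h : IsGreatest s a)
    (hle : ∀ c μ : ℝ, IsMeanUpperBound A c → (μ : RMax) ∈ s → μ ≤ c)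
    {ρ : ℝ} (hρ : IsMaxMean A ρ) (hmem : (ρ : RMax) ∈ s) : a = ρ := by
  refine le_antisymm ?_ (h.2 hmem)
  induction a using WithBot.recBotCoe with
  | bot => exact bot_le
  | coe μ => exact WithBot.coe_le_coe.mpr (hle ρ μ hρ.1 h.1)

end MaxMean

theorem max_root_eq_max_eigenvalue {n : ℕ}
    (A : Matrix (Fin (n + 1)) (Fin (n + 1)) RMax) (r m : RMax)
    (hr : IsAlgEigen A r ∧ ∀ r' : RMax, IsAlgEigen A r' → r' ≤ r)
    (hm : IsEigen A m ∧ ∀ l : RMax, IsEigen A l → l ≤ m) :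
    r = m := by
  have hr' : IsGreatest {l | IsAlgEigen A l} r := ⟨hr.1, fun l hl => hr.2 l hl⟩
  have hm' : IsGreatest {l | IsEigen A l} m := ⟨hm.1, fun l hl => hm.2 l hl⟩
  have hle_r : ∀ c μ : ℝ, IsMeanUpperBound A c → IsAlgEigen A μ → μ ≤ c :=
    fun _ _ => le_of_isAlgEigen
  have hle_m : ∀ c μ : ℝ, IsMeanUpperBound A c → IsEigen A μ → μ ≤ c := fun _ _ => le_of_isEigen
  rcases isMeanUpperBound_or_isMaxMean A with hall | ⟨ρ, hρ⟩
  · rw [hr'.eq_bot_of_forall_isMeanUpperBound hle_r hall,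
      hm'.eq_bot_of_forall_isMeanUpperBound hle_m hall]
  · rw [hr'.eq_of_isMaxMean hle_r hρ (isAlgEigen_of_isMaxMean hρ),
      hm'.eq_of_isMaxMean hle_m hρ (isEigen_of_isMaxMean hρ)]
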